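/- arXiv:1201.0609 — 6 statements merged into one kernel-verified Lean document; each statement's English description precedes it below -/
import Mathlib

section
/- Let s ∈ ℂ with |s| < 1 and define φ_s : ℕ → ℂ by φ_s(n) = sⁿ. Then φ_s belongs to the class 𝒞 and ‖φ_s‖_𝒞 = |1−s|/(1−|s|). -/
open MeasureTheory Filter

noncomputable section

/-- The Hilbert space `ℓ²(ℕ; ℂ)`. -/
abbrev ell2 : Type := lp (fun _ : ℕ => ℂ) 2

/-- A matrix `h : ℕ → ℕ → ℂ` is of trace class if it admits a representation
`h i j = ∑ₖ xₖ(i) · conj (yₖ(j))` with `xₖ, yₖ ∈ ℓ²(ℕ; ℂ)` and `∑ₖ ‖xₖ‖₂·‖yₖ‖₂ < ∞`. -/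
def IsTraceClass (h : ℕ → ℕ → ℂ) : Prop :=
  ∃ x y : ℕ → ell2,
    (Summable fun k => ‖x k‖ * ‖y k‖) ∧
    ∀ i j, h i j = ∑' k, (x k : ℕ → ℂ) i * (starRingEnd ℂ) ((y k : ℕ → ℂ) j)

/-- The trace norm of a matrix: the infimum of `∑ₖ ‖xₖ‖₂·‖yₖ‖₂` over all representations
`h i j = ∑ₖ xₖ(i) · conj (yₖ(j))` as above. -/
def traceNorm (h : ℕ → ℕ → ℂ) : ℝ :=
  sInf { c : ℝ | ∃ x y : ℕ → ell2,
    (Summable fun k => ‖x k‖ * ‖y k‖) ∧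
    (∀ i j, h i j = ∑' k, (x k : ℕ → ℂ) i * (starRingEnd ℂ) ((y k : ℕ → ℂ) j)) ∧
    c = ∑' k, ‖x k‖ * ‖y k‖ }

/-- The Hankel matrix `h_φ(i,j) = φ(i+j) − φ(i+j+1)`. -/
def hankelH (φ : ℕ → ℂ) : ℕ → ℕ → ℂ := fun i j => φ (i+j) - φ (i+j+1)

/-- The Hankel matrix `k_φ(i,j) = φ(i+j+1) − φ(i+j+2)`. -/
def hankelK (φ : ℕ → ℂ) : ℕ → ℕ → ℂ := fun i j => φ (i+j+1) - φ (i+j+2)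

/-- The class `𝒞`: both Hankel matrices `h_φ` and `k_φ` are of trace class. -/
def MemC (φ : ℕ → ℂ) : Prop := IsTraceClass (hankelH φ) ∧ IsTraceClass (hankelK φ)

/-- The norm `‖φ‖_𝒞 = ‖h_φ‖₁ + ‖k_φ‖₁ + |c|`, where `c = lim_{n→∞} φ(n)`
(expressed via `limUnder`, which gives the limit whenever it exists). -/
def CNorm (φ : ℕ → ℂ) : ℝ :=
  traceNorm (hankelH φ) + traceNorm (hankelK φ) + ‖limUnder atTop φ‖

/-!
Both Hankel matrices of `φ_s` are rank one: with `g = (sⁿ)ₙ ∈ ℓ²`, one has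
`h_φ(i,j) = (1 - s) sⁱ · sʲ` and `k_φ(i,j) = s (1 - s) sⁱ · sʲ`. A rank-one matrix
`a(i) · conj (b(j))` has trace norm exactly `‖a‖₂ ‖b‖₂`: the one-term representation gives `≤`,
and any representation `∑ₖ xₖ ⊗ conj yₖ` converges in operator norm to the rank-one operator
`rankOne a b`, whose operator norm `‖a‖ ‖b‖` is at most `∑ₖ ‖xₖ‖ ‖yₖ‖`. Since
`‖g‖₂² = 1 / (1 - |s|²)` and `sⁿ → 0`, the `𝒞`-norm is `|1 - s| (1 + |s|) / (1 - |s|²)`.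
-/

open InnerProductSpace

lemma rankOne_single_apply (a b : ell2) (i j : ℕ) :
    rankOne ℂ a b (lp.single 2 j 1) i = (a : ℕ → ℂ) i * (starRingEnd ℂ) ((b : ℕ → ℂ) j) := by
  simp [lp.inner_single_right, mul_comm]

lemma summable_rankOne {x y : ℕ → ell2} (hsum : Summable fun k => ‖x k‖ * ‖y k‖) :
    Summable fun k => rankOne ℂ (x k) (y k) :=
  Summable.of_norm (by simpa using hsum)

lemma tsum_rankOne_single_apply {x y : ℕ → ell2} (hsum : Summable fun k => ‖x k‖ * ‖y k‖)
    (i j : ℕ) :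
    (∑' k, rankOne ℂ (x k) (y k)) (lp.single 2 j 1) i
      = ∑' k, (x k : ℕ → ℂ) i * (starRingEnd ℂ) ((y k : ℕ → ℂ) j) := by
  have hT := summable_rankOne hsum
  let apply_single := ContinuousLinearMap.apply ℂ ell2 (lp.single 2 j 1 : ell2)
  calc (∑' k, rankOne ℂ (x k) (y k)) (lp.single 2 j 1) i
      = lp.evalCLM ℂ (fun _ : ℕ => ℂ) 2 i (apply_single (∑' k, rankOne ℂ (x k) (y k))) := rfl
    _ = ∑' k, lp.evalCLM ℂ (fun _ : ℕ => ℂ) 2 i (apply_single (rankOne ℂ (x k) (y k))) := by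
      rw [apply_single.map_tsum hT, ContinuousLinearMap.map_tsum _ (hT.mapL apply_single)]
    _ = _ := tsum_congr fun k => rankOne_single_apply (x k) (y k) i j

lemma ell2_clm_ext {S T : ell2 →L[ℂ] ell2}
    (h : ∀ i j, S (lp.single 2 j 1) i = T (lp.single 2 j 1) i) : S = T :=
  lp.ext_continuousLinearMap ENNReal.ofNat_ne_top fun j =>
    ContinuousLinearMap.ext_ring (lp.ext (funext fun i => h i j))

lemma norm_mul_norm_le_tsum_of_rep (a b : ell2) {x y : ℕ → ell2}
    (hsum : Summable fun k => ‖x k‖ * ‖y k‖)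
    (hrep : ∀ i j, (a : ℕ → ℂ) i * (starRingEnd ℂ) ((b : ℕ → ℂ) j)
      = ∑' k, (x k : ℕ → ℂ) i * (starRingEnd ℂ) ((y k : ℕ → ℂ) j)) :
    ‖a‖ * ‖b‖ ≤ ∑' k, ‖x k‖ * ‖y k‖ := by
  have hT : ∑' k, rankOne ℂ (x k) (y k) = rankOne ℂ a b := ell2_clm_ext fun i j => by
    rw [tsum_rankOne_single_apply hsum, rankOne_single_apply, hrep]
  calc ‖a‖ * ‖b‖ = ‖∑' k, rankOne ℂ (x k) (y k)‖ := by rw [hT, norm_rankOne]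
    _ ≤ ∑' k, ‖rankOne ℂ (x k) (y k)‖ := norm_tsum_le_tsum_norm (by simpa using hsum)
    _ = ∑' k, ‖x k‖ * ‖y k‖ := by simp only [norm_rankOne]

lemma isTraceClass_and_traceNorm_outer (a b : ell2) :
    IsTraceClass (fun i j => (a : ℕ → ℂ) i * (starRingEnd ℂ) ((b : ℕ → ℂ) j)) ∧
      traceNorm (fun i j => (a : ℕ → ℂ) i * (starRingEnd ℂ) ((b : ℕ → ℂ) j)) = ‖a‖ * ‖b‖ := by
  set x : ℕ → ell2 := Pi.single 0 a
  set y : ℕ → ell2 := Pi.single 0 b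
  have hnorm : HasSum (fun k => ‖x k‖ * ‖y k‖) (‖a‖ * ‖b‖) := by
    simpa [x, y] using hasSum_single (f := fun k => ‖x k‖ * ‖y k‖) 0 fun k hk => by simp [x, hk]
  have hrep : ∀ i j, (a : ℕ → ℂ) i * (starRingEnd ℂ) ((b : ℕ → ℂ) j)
      = ∑' k, (x k : ℕ → ℂ) i * (starRingEnd ℂ) ((y k : ℕ → ℂ) j) := fun i j => by
    rw [tsum_eq_single 0 fun k hk => by simp [x, hk]]
    simp [x, y]
  refine ⟨⟨x, y, hnorm.summable, hrep⟩, le_antisymm ?_ ?_⟩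
  · refine csInf_le ⟨0, ?_⟩ ⟨x, y, hnorm.summable, hrep, hnorm.tsum_eq.symm⟩
    rintro _ ⟨x', y', -, -, rfl⟩
    exact tsum_nonneg fun k => by positivity
  · refine le_csInf ⟨_, x, y, hnorm.summable, hrep, rfl⟩ ?_
    rintro _ ⟨x', y', hsum', hrep', rfl⟩
    exact norm_mul_norm_le_tsum_of_rep a b hsum' hrep'

lemma hasSum_norm_pow_sq {s : ℂ} (hs : ‖s‖ < 1) :
    HasSum (fun n : ℕ => ‖s ^ n‖ ^ 2) (1 - ‖s‖ ^ 2)⁻¹ := by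
  simp_rw [norm_pow, ← pow_mul, mul_comm _ 2, pow_mul]
  exact hasSum_geometric_of_lt_one (by positivity) (by nlinarith [norm_nonneg s])

def geomVec {s : ℂ} (hs : ‖s‖ < 1) : ell2 :=
  ⟨fun n => s ^ n, memℓp_gen <| by simpa using (hasSum_norm_pow_sq hs).summable⟩

lemma geomVec_apply {s : ℂ} (hs : ‖s‖ < 1) (n : ℕ) : (geomVec hs : ℕ → ℂ) n = s ^ n := rfl

lemma norm_geomVec_sq {s : ℂ} (hs : ‖s‖ < 1) : ‖geomVec hs‖ ^ 2 = (1 - ‖s‖ ^ 2)⁻¹ := by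
  have h := lp.hasSum_norm (p := 2) (by norm_num) (geomVec hs)
  simp only [ENNReal.toReal_ofNat, Real.rpow_two] at h
  exact h.unique (hasSum_norm_pow_sq hs)

lemma hankelH_mul_pow {s : ℂ} (c : ℂ) (hs : ‖s‖ < 1) :
    hankelH (fun n => c * s ^ n) = fun i j =>
      (((c * (1 - s)) • geomVec hs : ell2) : ℕ → ℂ) i *
        (starRingEnd ℂ) ((geomVec (s := starRingEnd ℂ s) (by simpa using hs) : ℕ → ℂ) j) := by
  funext i j
  simp only [hankelH, lp.coeFn_smul, Pi.smul_apply, geomVec_apply, smul_eq_mul, map_pow,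
    Complex.conj_conj]
  ring

lemma isTraceClass_and_traceNorm_hankelH_mul_pow {s : ℂ} (c : ℂ) (hs : ‖s‖ < 1) :
    IsTraceClass (hankelH fun n => c * s ^ n) ∧
      traceNorm (hankelH fun n => c * s ^ n) = ‖c‖ * ‖1 - s‖ / (1 - ‖s‖ ^ 2) := by
  have hconj : ‖starRingEnd ℂ s‖ < 1 := by simpa using hs
  obtain ⟨htc, hnorm⟩ := isTraceClass_and_traceNorm_outer
    ((c * (1 - s)) • geomVec hs) (geomVec hconj)
  rw [hankelH_mul_pow c hs]
  refine ⟨htc, hnorm.trans ?_⟩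
  have hnorm_conj : ‖geomVec hconj‖ = ‖geomVec hs‖ := by
    rw [← sq_eq_sq₀ (norm_nonneg _) (norm_nonneg _), norm_geomVec_sq, norm_geomVec_sq,
      Complex.norm_conj]
  rw [norm_smul, norm_mul, mul_assoc, hnorm_conj, ← sq, norm_geomVec_sq, div_eq_mul_inv]

/-- For `|s| < 1`, the function `φ_s(n) = sⁿ` belongs to `𝒞` and
`‖φ_s‖_𝒞 = |1−s|/(1−|s|)`. -/
theorem stmt2 (s : ℂ) (hs : ‖s‖ < 1) :
    MemC (fun n : ℕ => s ^ n) ∧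
      CNorm (fun n : ℕ => s ^ n) = ‖1 - s‖ / (1 - ‖s‖) := by
  have hH : hankelH (fun n : ℕ => s ^ n) = hankelH fun n => 1 * s ^ n := by simp
  have hK : hankelK (fun n : ℕ => s ^ n) = hankelH fun n => s * s ^ n := by
    funext i j
    simp only [hankelK, hankelH]
    ring
  obtain ⟨hHtc, hHnorm⟩ := isTraceClass_and_traceNorm_hankelH_mul_pow 1 hs
  obtain ⟨hKtc, hKnorm⟩ := isTraceClass_and_traceNorm_hankelH_mul_pow s hs
  have hlim : limUnder atTop (fun n : ℕ => s ^ n) = 0 :=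
    (tendsto_pow_atTop_nhds_zero_of_norm_lt_one hs).limUnder_eq
  refine ⟨⟨hH ▸ hHtc, hK ▸ hKtc⟩, ?_⟩
  have h1 : 1 - ‖s‖ ≠ 0 := by linarith
  have h2 : 1 - ‖s‖ ^ 2 ≠ 0 := by nlinarith [norm_nonneg s]
  rw [CNorm, hH, hK, hHnorm, hKnorm, hlim, norm_zero, norm_one, add_zero, ← add_div,
    div_eq_div_iff h2 h1]
  ring

end
end

section
/- Let φ : ℕ → ℂ satisfy ∑_{n=0}^∞ |φ(n) − φ(n+1)| < ∞ and define ψ₁(n) = ∑_{i=0}^∞ (φ(n+2i) − φ(n+2i+1)) and ψ₂(n) = ψ₁(n+1). Suppose (x_m)_{m∈ℕ}, (y_m)_{m∈ℕ} are sequences in ℓ²(ℕ;ℂ) with ∑_{m=0}^∞ ‖x_m‖₂·‖y_m‖₂ < ∞ and φ(i+j) − φ(i+j+1) = ∑_{m=0}^∞ x_m(i)·conj(y_m(j)) for all i,j ∈ ℕ, and (z_m)_{m∈ℕ}, (w_m)_{m∈ℕ} are sequences in ℓ²(ℕ;ℂ) with ∑_{m=0}^∞ ‖z_m‖₂·‖w_m‖₂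 < ∞ and φ(i+j+1) − φ(i+j+2) = ∑_{m=0}^∞ z_m(i)·conj(w_m(j)) for all i,j ∈ ℕ. Then for all k,l ∈ ℕ the iterated series below converge absolutely and ψ₁(k+l) = ∑_{m=0}^∞ ∑_{t=0}^∞ x_m(k+t)·conj(y_m(l+t)) and ψ₂(k+l) = ∑_{m=0}^∞ ∑_{t=0}^∞ z_m(k+t)·conj(w_m(l+t)). -/
open MeasureTheory Filter

noncomputable section

/-- `ψ₁(n) = ∑_{i=0}^∞ (φ(n+2i) − φ(n+2i+1))`. -/
def psiOne (φ : ℕ → ℂ) (n : ℕ) : ℂ := ∑' i : ℕ, (φ (n + 2*i) - φ (n + 2*i + 1))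

/-- `ψ₂(n) = ψ₁(n+1)`. -/
def psiTwo (φ : ℕ → ℂ) (n : ℕ) : ℂ := psiOne φ (n + 1)

/-!
By Cauchy–Schwarz applied to the shifted sequences, `∑ₜ |xₘ(k+t)|·|yₘ(l+t)| ≤ ‖xₘ‖₂‖yₘ‖₂`, so
`∑ₘ ‖xₘ‖₂‖yₘ‖₂ < ∞` makes the family `(m, t) ↦ xₘ(k+t)·conj(yₘ(l+t))` absolutely summable on
`ℕ × ℕ` and the two sums may be interchanged. Summing first over `m` gives, by the representation
at `(k+t, l+t)`, the term `φ(k+l+2t) − φ(k+l+2t+1)` of `ψ₁(k+l)`; likewise for `ψ₂`.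
-/

open Function
open scoped ENNReal ComplexConjugate

namespace lp

variable {α β E : Type*} [NormedAddCommGroup E] {p q : ℝ≥0∞}

def compInjective (hp : 0 < p.toReal) (f : lp (fun _ : α => E) p) {e : β → α}
    (he : Injective e) : lp (fun _ : β => E) p :=
  ⟨f ∘ e, memℓp_gen (((lp.memℓp f).summable hp).comp_injective he)⟩

theorem norm_compInjective_le (hp : 0 < p.toReal) (f : lp (fun _ : α => E) p) {e : β → α}
    (he : Injective e) : ‖compInjective hp f he‖ ≤ ‖f‖ :=
  norm_le_of_tsum_le hp (norm_nonneg' f) <| by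
    rw [norm_rpow_eq_tsum hp f]
    exact tsum_comp_le_tsum_of_inj ((lp.memℓp f).summable hp) (fun _ => by positivity) he

theorem tsum_mul_comp_le_mul_norm (hpq : p.toReal.HolderConjugate q.toReal)
    (f : lp (fun _ : α => E) p) (g : lp (fun _ : α => E) q) {e e' : β → α}
    (he : Injective e) (he' : Injective e') :
    (Summable fun i => ‖f (e i)‖ * ‖g (e' i)‖) ∧
      ∑' i, ‖f (e i)‖ * ‖g (e' i)‖ ≤ ‖f‖ * ‖g‖ := by
  obtain ⟨hsum, hle⟩ := lp.tsum_mul_le_mul_norm hpq (compInjective hpq.pos f he)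
    (compInjective hpq.symm.pos g he')
  exact ⟨hsum, hle.trans (mul_le_mul (norm_compInjective_le _ f he)
    (norm_compInjective_le _ g he') (norm_nonneg' _) (norm_nonneg' _))⟩

end lp

section ShiftedProducts

variable (x y : ℕ → ell2) (k l : ℕ)

theorem norm_shift_mul_conj (m t : ℕ) :
    ‖(x m : ℕ → ℂ) (k+t) * conj ((y m : ℕ → ℂ) (l+t))‖ =
      ‖(x m : ℕ → ℂ) (k+t)‖ * ‖(y m : ℕ → ℂ) (l+t)‖ := by
  rw [norm_mul, Complex.norm_conj]

theorem summable_norm_shift_mul_conj_and_tsum_le (m : ℕ) :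
    (Summable fun t => ‖(x m : ℕ → ℂ) (k+t) * conj ((y m : ℕ → ℂ) (l+t))‖) ∧
      ∑' t, ‖(x m : ℕ → ℂ) (k+t) * conj ((y m : ℕ → ℂ) (l+t))‖ ≤ ‖x m‖ * ‖y m‖ := by
  simp only [norm_shift_mul_conj]
  exact lp.tsum_mul_comp_le_mul_norm (by norm_num [Real.holderConjugate_iff]) (x m) (y m)
    (add_right_injective k) (add_right_injective l)

variable {x y}

theorem summable_tsum_norm_shift_mul_conj (hxy : Summable fun m => ‖x m‖ * ‖y m‖) :
    Summable fun m => ∑' t, ‖(x m : ℕ → ℂ) (k+t) * conj ((y m : ℕ → ℂ) (l+t))‖ :=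
  hxy.of_nonneg_of_le (fun _ => tsum_nonneg fun _ => norm_nonneg _)
    fun m => (summable_norm_shift_mul_conj_and_tsum_le x y k l m).2

theorem tsum_diagonal_eq_tsum_tsum_shift_mul_conj (hxy : Summable fun m => ‖x m‖ * ‖y m‖)
    (g : ℕ → ℂ) (hrep : ∀ i j, g (i+j) = ∑' m, (x m : ℕ → ℂ) i * conj ((y m : ℕ → ℂ) j)) :
    ∑' t, g (k + l + 2*t) =
      ∑' m, ∑' t, (x m : ℕ → ℂ) (k+t) * conj ((y m : ℕ → ℂ) (l+t)) := by
  set F : ℕ → ℕ → ℂ := fun m t => (x m : ℕ → ℂ) (k+t) * conj ((y m : ℕ → ℂ) (l+t))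
  have hrow (m : ℕ) : Summable fun t => ‖F m t‖ :=
    (summable_norm_shift_mul_conj_and_tsum_le x y k l m).1
  have hF : Summable (uncurry F) := Summable.of_norm <|
    (summable_prod_of_nonneg fun _ => norm_nonneg _).2
      ⟨hrow, summable_tsum_norm_shift_mul_conj k l hxy⟩
  have hcol (t : ℕ) : Summable fun m => F m t := by
    refine Summable.of_norm (hxy.of_nonneg_of_le (fun _ => norm_nonneg _) fun m => ?_)
    rw [norm_shift_mul_conj]
    exact mul_le_mul (lp.norm_apply_le_norm two_ne_zero _ _)
      (lp.norm_apply_le_norm two_ne_zero _ _) (norm_nonneg _) (norm_nonneg _)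
  have hdiag (t : ℕ) : g (k + l + 2*t) = ∑' m, F m t := by
    rw [← hrep]
    congr 1
    ring
  rw [tsum_congr hdiag]
  exact hF.tsum_comm' (fun m => (hrow m).of_norm) hcol

end ShiftedProducts

theorem stmt5_general (φ : ℕ → ℂ)
    (x y z w : ℕ → ell2)
    (hxy : Summable fun m => ‖x m‖ * ‖y m‖)
    (hrep1 : ∀ i j : ℕ, φ (i+j) - φ (i+j+1) =
      ∑' m, (x m : ℕ → ℂ) i * (starRingEnd ℂ) ((y m : ℕ → ℂ) j))
    (hzw : Summable fun m => ‖z m‖ * ‖w m‖)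
    (hrep2 : ∀ i j : ℕ, φ (i+j+1) - φ (i+j+2) =
      ∑' m, (z m : ℕ → ℂ) i * (starRingEnd ℂ) ((w m : ℕ → ℂ) j)) :
    ∀ k l : ℕ,
      (∀ m : ℕ, Summable fun t : ℕ =>
        ‖(x m : ℕ → ℂ) (k+t) * (starRingEnd ℂ) ((y m : ℕ → ℂ) (l+t))‖) ∧
      (Summable fun m : ℕ =>
        ∑' t : ℕ, ‖(x m : ℕ → ℂ) (k+t) * (starRingEnd ℂ) ((y m : ℕ → ℂ) (l+t))‖) ∧
      psiOne φ (k+l) =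
        ∑' m : ℕ, ∑' t : ℕ, (x m : ℕ → ℂ) (k+t) * (starRingEnd ℂ) ((y m : ℕ → ℂ) (l+t)) ∧
      (∀ m : ℕ, Summable fun t : ℕ =>
        ‖(z m : ℕ → ℂ) (k+t) * (starRingEnd ℂ) ((w m : ℕ → ℂ) (l+t))‖) ∧
      (Summable fun m : ℕ =>
        ∑' t : ℕ, ‖(z m : ℕ → ℂ) (k+t) * (starRingEnd ℂ) ((w m : ℕ → ℂ) (l+t))‖) ∧
      psiTwo φ (k+l) =
        ∑' m : ℕ, ∑' t : ℕ, (z m : ℕ → ℂ) (k+t) * (starRingEnd ℂ) ((w m : ℕ → ℂ) (l+t)) := by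
  intro k l
  refine ⟨fun m => (summable_norm_shift_mul_conj_and_tsum_le x y k l m).1,
    summable_tsum_norm_shift_mul_conj k l hxy,
    tsum_diagonal_eq_tsum_tsum_shift_mul_conj k l hxy (fun n => φ n - φ (n+1)) hrep1,
    fun m => (summable_norm_shift_mul_conj_and_tsum_le z w k l m).1,
    summable_tsum_norm_shift_mul_conj k l hzw, ?_⟩
  rw [psiTwo, psiOne,
    ← tsum_diagonal_eq_tsum_tsum_shift_mul_conj k l hzw (fun n => φ (n+1) - φ (n+2)) hrep2]
  congr! 2 with t
  ring_nf

/-- Given trace-class representations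
`φ(i+j) − φ(i+j+1) = ∑ₘ xₘ(i)·conj(yₘ(j))` and `φ(i+j+1) − φ(i+j+2) = ∑ₘ zₘ(i)·conj(wₘ(j))`,
the iterated series below converge absolutely and
`ψ₁(k+l) = ∑ₘ ∑ₜ xₘ(k+t)·conj(yₘ(l+t))`, `ψ₂(k+l) = ∑ₘ ∑ₜ zₘ(k+t)·conj(wₘ(l+t))`. -/
theorem stmt5 (φ : ℕ → ℂ) (hφ : Summable fun n => ‖φ n - φ (n+1)‖)
    (x y z w : ℕ → ell2)
    (hxy : Summable fun m => ‖x m‖ * ‖y m‖)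
    (hrep1 : ∀ i j : ℕ, φ (i+j) - φ (i+j+1) =
      ∑' m, (x m : ℕ → ℂ) i * (starRingEnd ℂ) ((y m : ℕ → ℂ) j))
    (hzw : Summable fun m => ‖z m‖ * ‖w m‖)
    (hrep2 : ∀ i j : ℕ, φ (i+j+1) - φ (i+j+2) =
      ∑' m, (z m : ℕ → ℂ) i * (starRingEnd ℂ) ((w m : ℕ → ℂ) j)) :
    ∀ k l : ℕ,
      (∀ m : ℕ, Summable fun t : ℕ =>
        ‖(x m : ℕ → ℂ) (k+t) * (starRingEnd ℂ) ((y m : ℕ → ℂ) (l+t))‖) ∧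
      (Summable fun m : ℕ =>
        ∑' t : ℕ, ‖(x m : ℕ → ℂ) (k+t) * (starRingEnd ℂ) ((y m : ℕ → ℂ) (l+t))‖) ∧
      psiOne φ (k+l) =
        ∑' m : ℕ, ∑' t : ℕ, (x m : ℕ → ℂ) (k+t) * (starRingEnd ℂ) ((y m : ℕ → ℂ) (l+t)) ∧
      (∀ m : ℕ, Summable fun t : ℕ =>
        ‖(z m : ℕ → ℂ) (k+t) * (starRingEnd ℂ) ((w m : ℕ → ℂ) (l+t))‖) ∧
      (Summable fun m : ℕ =>
        ∑' t : ℕ, ‖(z m : ℕ → ℂ) (k+t) * (starRingEnd ℂ) ((w m : ℕ → ℂ) (l+t))‖) ∧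
      psiTwo φ (k+l) =
        ∑' m : ℕ, ∑' t : ℕ, (z m : ℕ → ℂ) (k+t) * (starRingEnd ℂ) ((w m : ℕ → ℂ) (l+t)) :=
  stmt5_general φ x y z w hxy hrep1 hzw hrep2

end
end

section
/- For n ∈ ℕ let χ_n : ℕ → ℂ be defined by χ_n(k) = 1 if k = n and χ_n(k) = 0 otherwise. Then χ_n belongs to the class 𝒞 and ‖χ_n‖_𝒞 ≤ max{1, 4n}. -/
open MeasureTheory Filter

noncomputable section

/-! The row decomposition `h_{χ_m} = ∑_{i ≤ m} eᵢ ⊗ (e_{m-i} − e_{m-i-1})` (the last term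
being `e_m ⊗ e_0`) exhibits `h_{χ_m}` as a sum of `m + 1` rank-one matrices of total weight
at most `2m + 1`. Since `k_φ` is `h` of the shifted sequence, `k_{χ_{m+1}} = h_{χ_m}` and
`k_{χ_0} = 0`, so `‖χ_n‖_𝒞 ≤ (2n + 1) + (2n − 1) = 4n` for `n ≥ 1`, and `‖χ_0‖_𝒞 ≤ 1`. -/

open Finset
open scoped ComplexConjugate

local notation "𝐞" i => (lp.single 2 i (1 : ℂ) : ell2)

lemma norm_single_one (i : ℕ) : ‖𝐞 i‖ = 1 := by
  simp [lp.norm_single (p := 2) (by norm_num)]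

lemma traceNorm_le_tsum {h : ℕ → ℕ → ℂ} {x y : ℕ → ell2}
    (hs : Summable fun k => ‖x k‖ * ‖y k‖)
    (hrep : ∀ i j, h i j = ∑' k, (x k : ℕ → ℂ) i * conj ((y k : ℕ → ℂ) j)) :
    traceNorm h ≤ ∑' k, ‖x k‖ * ‖y k‖ :=
  csInf_le ⟨0, by rintro _ ⟨x, y, -, -, rfl⟩; exact tsum_nonneg fun k => by positivity⟩
    ⟨x, y, hs, hrep, rfl⟩

lemma isTraceClass_and_traceNorm_le_of_finset_sum {h : ℕ → ℕ → ℂ} (s : Finset ℕ)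
    (x y : ℕ → ell2)
    (hrep : ∀ i j, h i j = ∑ k ∈ s, (x k : ℕ → ℂ) i * conj ((y k : ℕ → ℂ) j)) :
    IsTraceClass h ∧ traceNorm h ≤ ∑ k ∈ s, ‖x k‖ * ‖y k‖ := by
  set x' : ℕ → ell2 := fun k => if k ∈ s then x k else 0
  have hweight : ∀ k ∉ s, ‖x' k‖ * ‖y k‖ = 0 := fun k hk => by simp [x', hk]
  have hs : Summable fun k => ‖x' k‖ * ‖y k‖ := summable_of_ne_finset_zero hweight
  have hrep' : ∀ i j, h i j = ∑' k, (x' k : ℕ → ℂ) i * conj ((y k : ℕ → ℂ) j) := by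
    intro i j
    rw [hrep, tsum_eq_sum (s := s) fun k hk => by simp [x', hk]]
    exact sum_congr rfl fun k hk => by simp [x', hk]
  refine ⟨⟨x', y, hs, hrep'⟩, (traceNorm_le_tsum hs hrep').trans_eq ?_⟩
  rw [tsum_eq_sum hweight]
  exact sum_congr rfl fun k hk => by simp [x', hk]

lemma hankelK_eq_hankelH_shift (φ : ℕ → ℂ) : hankelK φ = hankelH fun k => φ (k + 1) := rfl

lemma limUnder_single (n : ℕ) (c : ℂ) : limUnder atTop (Pi.single n c : ℕ → ℂ) = 0 := by
  refine (tendsto_const_nhds.congr' ?_).limUnder_eq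
  filter_upwards [eventually_gt_atTop n] with k hk
  simp [hk.ne']

def hankelSingleRow (m k : ℕ) : ell2 := (𝐞 (m - k)) - if k < m then 𝐞 (m - k - 1) else 0

lemma norm_hankelSingleRow_le (m k : ℕ) : ‖hankelSingleRow m k‖ ≤ 2 := by
  refine (norm_sub_le _ _).trans ?_
  split_ifs <;> norm_num [norm_single_one]

lemma hankelSingleRow_self (m : ℕ) : hankelSingleRow m m = 𝐞 0 := by
  simp [hankelSingleRow]

lemma hankelH_single_eq_sum (m i j : ℕ) :
    hankelH (Pi.single m 1) i j =
      ∑ k ∈ range (m + 1), ((𝐞 k) : ℕ → ℂ) i * conj ((hankelSingleRow m k : ℕ → ℂ) j) := by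
  simp only [lp.single_apply, Pi.single_apply, ite_mul, one_mul, zero_mul, sum_ite_eq,
    mem_range, hankelH, hankelSingleRow]
  split_ifs <;> simp [lp.single_apply, Pi.single_apply, apply_ite conj] <;> grind

lemma hankelH_single (m : ℕ) :
    IsTraceClass (hankelH (Pi.single m 1)) ∧ traceNorm (hankelH (Pi.single m 1)) ≤ 2 * m + 1 := by
  refine (isTraceClass_and_traceNorm_le_of_finset_sum _ _ _ (hankelH_single_eq_sum m)).imp_right
    fun hle => hle.trans ?_
  calc ∑ k ∈ range (m + 1), ‖𝐞 k‖ * ‖hankelSingleRow m k‖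
      = ∑ k ∈ range m, ‖hankelSingleRow m k‖ + ‖hankelSingleRow m m‖ := by
        simp only [norm_single_one, one_mul, sum_range_succ]
    _ ≤ ∑ k ∈ range m, 2 + 1 := by
        gcongr with k
        · exact norm_hankelSingleRow_le m k
        · rw [hankelSingleRow_self, norm_single_one]
    _ = 2 * m + 1 := by simp [mul_comm]

lemma hankelK_single_zero : hankelK (Pi.single 0 (1 : ℂ)) = 0 := by
  ext i j
  simp [hankelK]

lemma hankelK_single_succ (m : ℕ) :
    hankelK (Pi.single (m + 1) (1 : ℂ)) = hankelH (Pi.single m 1) := by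
  rw [hankelK_eq_hankelH_shift]
  congr 1
  ext k
  simp [Pi.single_apply]

lemma zero_isTraceClass_and_traceNorm_le : IsTraceClass 0 ∧ traceNorm 0 ≤ 0 := by
  simpa using isTraceClass_and_traceNorm_le_of_finset_sum ∅ 0 0 (h := 0) (by simp)

/-- The indicator function `χ_n` belongs to `𝒞` and
`‖χ_n‖_𝒞 ≤ max {1, 4n}`. -/
theorem stmt6 (n : ℕ) :
    MemC (fun k : ℕ => if k = n then (1 : ℂ) else 0) ∧
      CNorm (fun k : ℕ => if k = n then (1 : ℂ) else 0) ≤ max 1 (4 * (n : ℝ)) := by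
  have hχ : (fun k : ℕ => if k = n then (1 : ℂ) else 0) = Pi.single n 1 := by
    ext k
    simp [Pi.single_apply]
  rw [hχ, MemC, CNorm, limUnder_single, norm_zero, add_zero]
  obtain ⟨hH, hHle⟩ := hankelH_single n
  cases n with
  | zero =>
    rw [hankelK_single_zero]
    obtain ⟨hK, hKle⟩ := zero_isTraceClass_and_traceNorm_le
    refine ⟨⟨hH, hK⟩, le_max_of_le_left ?_⟩
    push_cast at hHle
    linarith
  | succ m =>
    rw [hankelK_single_succ]
    obtain ⟨hK, hKle⟩ := hankelH_single m
    refine ⟨⟨hH, hK⟩, le_max_of_le_right ?_⟩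
    push_cast at hHle ⊢
    linarith

end
end

section
/- Let r ∈ (0,1). Define φ_r : ℕ → ℂ by φ_r(k) = r^k, and for n ∈ ℕ define φ_{r,n} : ℕ → ℂ by φ_{r,n}(k) = r^k for 0 ≤ k ≤ n and φ_{r,n}(k) = 0 for k > n. Then φ_r and every φ_{r,n} belong to the class 𝒞, ‖φ_r‖_𝒞 = 1, ‖φ_r − φ_{r,n}‖_𝒞 ≤ ∑_{k=n+1}^∞ 4k·r^k for every n, and consequently lim_{n→∞} ‖φ_r − φ_{r,n}‖_𝒞 = 0. -/
open MeasureTheory Filter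

noncomputable section

/-!
A Hankel matrix `(a (i + j))` is the sum over all `(i, j)` of the rank-one matrices
`a (i + j) • eᵢ ⊗ eⱼ`; the antidiagonal `i + j = m` contributes `(m + 1) ‖a m‖`, so the trace norm
is at most `∑ (m + 1) ‖a m‖`. Applied to `h_ψ` and to `k_ψ = h_{ψ(· + 1)}` with
`a m = ψ m - ψ (m + 1)`, this gives `‖ψ‖_𝒞 ≤ ‖ψ 0‖ + ∑ 4k ‖ψ k‖ + |lim ψ|`, hence the tail estimate
for `ψ = φ_r - φ_{r,n}`.

For `φ_r` itself both Hankel matrices are multiples `c r^(i+j)` of the positive rank-one matrix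
`u ⊗ u`, `u = (rⁱ)`. Their trace norm is at most `c ‖u‖² = c / (1 - r²)` and at least their trace
`∑ c r^(2i)`, which is the same number; and `(1 - r + r (1 - r)) / (1 - r²) = 1`.
-/

open scoped ComplexConjugate

def IsTraceRep {ι : Type*} (h : ℕ → ℕ → ℂ) (x y : ι → ell2) : Prop :=
  (Summable fun k => ‖x k‖ * ‖y k‖) ∧ ∀ i j, h i j = ∑' k, x k i * conj (y k j)

namespace IsTraceRep

variable {ι κ : Type*} {h : ℕ → ℕ → ℂ} {x y : ι → ell2}

theorem comp_equiv (hxy : IsTraceRep h x y) (e : κ ≃ ι) : IsTraceRep h (x ∘ e) (y ∘ e) :=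
  ⟨e.summable_iff.2 hxy.1, fun i j => (hxy.2 i j).trans (e.tsum_eq _).symm⟩

theorem isTraceClass [Denumerable ι] (hxy : IsTraceRep h x y) : IsTraceClass h := by
  let e := (Denumerable.eqv ι).symm
  exact ⟨x ∘ e, y ∘ e, hxy.comp_equiv e⟩

theorem traceNorm_le [Denumerable ι] (hxy : IsTraceRep h x y) :
    traceNorm h ≤ ∑' k, ‖x k‖ * ‖y k‖ := by
  let e := (Denumerable.eqv ι).symm
  obtain ⟨hs, hrep⟩ := hxy.comp_equiv e
  have hbdd : BddBelow {c : ℝ | ∃ x y : ℕ → ell2, (Summable fun k => ‖x k‖ * ‖y k‖) ∧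
      (∀ i j, h i j = ∑' k, x k i * conj (y k j)) ∧ c = ∑' k, ‖x k‖ * ‖y k‖} := by
    refine ⟨0, ?_⟩
    rintro c ⟨x', y', -, -, rfl⟩
    exact tsum_nonneg fun k => by positivity
  calc traceNorm h ≤ ∑' k, ‖(x ∘ e) k‖ * ‖(y ∘ e) k‖ := csInf_le hbdd ⟨_, _, hs, hrep, rfl⟩
    _ = ∑' k, ‖x k‖ * ‖y k‖ := e.tsum_eq fun k => ‖x k‖ * ‖y k‖

end IsTraceRep

theorem traceNorm_nonneg (h : ℕ → ℕ → ℂ) : 0 ≤ traceNorm h := by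
  refine Real.sInf_nonneg ?_
  rintro c ⟨x, y, -, -, rfl⟩
  exact tsum_nonneg fun k => by positivity

theorem cNorm_nonneg (φ : ℕ → ℂ) : 0 ≤ CNorm φ :=
  add_nonneg (add_nonneg (traceNorm_nonneg _) (traceNorm_nonneg _)) (norm_nonneg _)

theorem isTraceRep_rankOne (u v : ell2) :
    IsTraceRep (fun i j => u i * conj (v j)) (Pi.single 0 u : ℕ → ell2) (Pi.single 0 v) := by
  refine ⟨summable_of_ne_finset_zero (s := {0}) fun k hk => ?_, fun i j => ?_⟩
  · simp [Finset.mem_singleton.not.1 hk]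
  · rw [tsum_eq_single 0 fun k hk => by simp [hk]]
    simp

theorem traceNorm_rankOne_le (u v : ell2) :
    traceNorm (fun i j => u i * conj (v j)) ≤ ‖u‖ * ‖v‖ :=
  (isTraceRep_rankOne u v).traceNorm_le.trans_eq <|
    (tsum_eq_single 0 fun k hk => by simp [hk]).trans (by simp)

theorem sum_norm_sq_le_norm_sq (x : ell2) (s : Finset ℕ) : ∑ i ∈ s, ‖x i‖ ^ 2 ≤ ‖x‖ ^ 2 := by
  have := lp.sum_rpow_le_norm_rpow (p := 2) (by norm_num) x s
  simpa only [ENNReal.toReal_ofNat, Real.rpow_two] using this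

theorem norm_sum_mul_conj_le (x y : ell2) (s : Finset ℕ) :
    ‖∑ i ∈ s, x i * conj (y i)‖ ≤ ‖x‖ * ‖y‖ :=
  calc ‖∑ i ∈ s, x i * conj (y i)‖ ≤ ∑ i ∈ s, ‖x i‖ * ‖y i‖ :=
        (norm_sum_le _ _).trans_eq (by simp)
    _ ≤ √(∑ i ∈ s, ‖x i‖ ^ 2) * √(∑ i ∈ s, ‖y i‖ ^ 2) := Real.sum_mul_le_sqrt_mul_sqrt _ _ _
    _ ≤ ‖x‖ * ‖y‖ := by
        gcongr <;> exact Real.sqrt_le_iff.2 ⟨norm_nonneg _, sum_norm_sq_le_norm_sq _ _⟩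

theorem tsum_le_traceNorm_of_diag {h : ℕ → ℕ → ℂ} (htc : IsTraceClass h) {d : ℕ → ℝ}
    (hd : ∀ i, h i i = d i) (hds : Summable d) : ∑' i, d i ≤ traceNorm h := by
  obtain ⟨x₀, y₀, hs₀, hrep₀⟩ := htc
  refine le_csInf ⟨_, x₀, y₀, hs₀, hrep₀, rfl⟩ ?_
  rintro c ⟨x, y, hs, hrep, rfl⟩
  refine hds.tsum_le_of_sum_le fun s => ?_
  have hCS k := norm_sum_mul_conj_le (x k) (y k) s
  have hCS_summable := Summable.of_nonneg_of_le (fun k => norm_nonneg _) hCS hs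
  have hdiag_summable (i : ℕ) : Summable fun k => x k i * conj (y k i) :=
    hs.of_norm_bounded fun k => by
      simpa using mul_le_mul (lp.norm_apply_le_norm two_ne_zero (x k) i)
        (lp.norm_apply_le_norm two_ne_zero (y k) i) (norm_nonneg _) (norm_nonneg _)
  calc ∑ i ∈ s, d i ≤ ‖∑ i ∈ s, (d i : ℂ)‖ := by
        rw [← Complex.ofReal_sum, Complex.norm_real]
        exact Real.le_norm_self _
    _ = ‖∑' k, ∑ i ∈ s, x k i * conj (y k i)‖ := by
        rw [Summable.tsum_finsetSum fun i _ => hdiag_summable i]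
        simp only [← hd, hrep]
    _ ≤ ∑' k, ‖∑ i ∈ s, x k i * conj (y k i)‖ := norm_tsum_le_tsum_norm hCS_summable
    _ ≤ ∑' k, ‖x k‖ * ‖y k‖ := hCS_summable.tsum_le_tsum hCS hs

theorem exists_ell2_eq_pow {r : ℝ} (hr : |r| < 1) :
    ∃ u : ell2, (∀ i, u i = (r : ℂ) ^ i) ∧ ‖u‖ ^ 2 = (1 - r ^ 2)⁻¹ := by
  have hr2 : r ^ 2 < 1 := (sq_lt_one_iff_abs_lt_one r).2 hr
  have hnorm_sq (i : ℕ) : ‖(r : ℂ) ^ i‖ ^ (2 : ℝ) = (r ^ 2) ^ i := by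
    rw [Real.rpow_two, norm_pow, Complex.norm_real, Real.norm_eq_abs, ← pow_mul, mul_comm,
      pow_mul, sq_abs]
  have hmem : Memℓp (fun i : ℕ => (r : ℂ) ^ i) 2 := memℓp_gen <| by
    simpa only [ENNReal.toReal_ofNat, hnorm_sq] using
      summable_geometric_of_lt_one (sq_nonneg r) hr2
  refine ⟨⟨_, hmem⟩, fun i => rfl, ?_⟩
  rw [← Real.rpow_two, ← ENNReal.toReal_ofNat 2, lp.norm_rpow_eq_tsum (by norm_num)]
  simp only [ENNReal.toReal_ofNat]
  exact (tsum_congr hnorm_sq).trans (tsum_geometric_of_lt_one (sq_nonneg r) hr2)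

def geometricHankel (c r : ℝ) : ℕ → ℕ → ℂ := fun i j => c * (r : ℂ) ^ (i + j)

theorem exists_geometricHankel_eq_rankOne (c : ℝ) {r : ℝ} (hr : |r| < 1) :
    ∃ u : ell2, ‖u‖ ^ 2 = (1 - r ^ 2)⁻¹ ∧
      geometricHankel c r = fun i j => ((c : ℂ) • u) i * conj (u j) := by
  obtain ⟨u, hu, hnorm⟩ := exists_ell2_eq_pow hr
  refine ⟨u, hnorm, funext₂ fun i j => ?_⟩
  simp only [geometricHankel, lp.coeFn_smul, Pi.smul_apply, smul_eq_mul, hu, map_pow,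
    Complex.conj_ofReal, pow_add, mul_assoc]

theorem isTraceClass_geometricHankel (c : ℝ) {r : ℝ} (hr : |r| < 1) :
    IsTraceClass (geometricHankel c r) := by
  obtain ⟨u, -, hu⟩ := exists_geometricHankel_eq_rankOne c hr
  exact hu ▸ (isTraceRep_rankOne _ u).isTraceClass

theorem traceNorm_geometricHankel {c r : ℝ} (hc : 0 ≤ c) (hr : |r| < 1) :
    traceNorm (geometricHankel c r) = c / (1 - r ^ 2) := by
  have hr2 : r ^ 2 < 1 := (sq_lt_one_iff_abs_lt_one r).2 hr
  obtain ⟨u, hnorm, hu⟩ := exists_geometricHankel_eq_rankOne c hr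
  refine le_antisymm ?_ ?_
  · calc traceNorm (geometricHankel c r) ≤ ‖(c : ℂ) • u‖ * ‖u‖ := hu ▸ traceNorm_rankOne_le _ u
      _ = c / (1 - r ^ 2) := by
        rw [norm_smul, mul_assoc, ← sq, hnorm, Complex.norm_real, Real.norm_of_nonneg hc,
          div_eq_mul_inv]
  · have hdiag (i : ℕ) : geometricHankel c r i i = ((c * (r ^ 2) ^ i : ℝ) : ℂ) := by
      simp only [geometricHankel]
      push_cast
      ring
    have := tsum_le_traceNorm_of_diag (isTraceClass_geometricHankel c hr) hdiag
      ((summable_geometric_of_lt_one (sq_nonneg r) hr2).mul_left c)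
    rwa [tsum_mul_left, tsum_geometric_of_lt_one (sq_nonneg r) hr2, ← div_eq_mul_inv] at this

theorem hasSum_prod_comp_add {f : ℕ → ℝ} (hf : 0 ≤ f)
    (h : Summable fun n : ℕ => ((n : ℝ) + 1) * f n) :
    HasSum (fun p : ℕ × ℕ => f (p.1 + p.2)) (∑' n : ℕ, ((n : ℝ) + 1) * f n) := by
  let e := Finset.HasAntidiagonal.sigmaAntidiagonalEquivProd (A := ℕ)
  have hfiber (n : ℕ) : ∑' kl : Finset.HasAntidiagonal.antidiagonal n,
      f ((kl : ℕ × ℕ).1 + (kl : ℕ × ℕ).2) = ((n : ℝ) + 1) * f n := by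
    rw [tsum_fintype, Finset.sum_coe_sort _ fun kl : ℕ × ℕ => f (kl.1 + kl.2),
      Finset.sum_congr rfl fun kl hkl => by rw [Finset.HasAntidiagonal.mem_antidiagonal.1 hkl]]
    simp [Finset.Nat.card_antidiagonal]
  have hsigma : Summable fun x : Σ n, Finset.HasAntidiagonal.antidiagonal n =>
      f ((x.2 : ℕ × ℕ).1 + (x.2 : ℕ × ℕ).2) :=
    (summable_sigma_of_nonneg fun _ => hf _).2
      ⟨fun _ => Summable.of_finite, h.congr fun n => (hfiber n).symm⟩
  rw [← e.hasSum_iff, ← tsum_congr hfiber, ← hsigma.tsum_sigma' fun _ => Summable.of_finite]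
  exact hsigma.hasSum

theorem norm_smul_single_mul_norm_single (c : ℂ) (i j : ℕ) :
    ‖c • (lp.single 2 i 1 : ell2)‖ * ‖(lp.single 2 j 1 : ell2)‖ = ‖c‖ := by
  simp [norm_smul, lp.norm_single]

theorem isTraceRep_hankel {a : ℕ → ℂ} (ha : Summable fun n : ℕ => ((n : ℝ) + 1) * ‖a n‖) :
    IsTraceRep (fun i j => a (i + j))
      (fun p : ℕ × ℕ => a (p.1 + p.2) • (lp.single 2 p.1 1 : ell2))
      (fun p => lp.single 2 p.2 1) := by
  refine ⟨?_, fun i j => ?_⟩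
  · simp only [norm_smul_single_mul_norm_single]
    exact (hasSum_prod_comp_add (fun _ => norm_nonneg _) ha).summable
  · rw [tsum_eq_single (i, j) fun p hp => ?_]
    · simp
    · obtain ⟨k, l⟩ := p
      rcases not_and_or.1 (Prod.mk_inj.not.1 hp) with hk | hl
      · simp [Pi.single_apply, Ne.symm hk]
      · simp [Pi.single_apply, Ne.symm hl]

theorem isTraceClass_hankel {a : ℕ → ℂ} (ha : Summable fun n : ℕ => ((n : ℝ) + 1) * ‖a n‖) :
    IsTraceClass (fun i j => a (i + j)) :=
  (isTraceRep_hankel ha).isTraceClass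

theorem traceNorm_hankel_le {a : ℕ → ℂ} (ha : Summable fun n : ℕ => ((n : ℝ) + 1) * ‖a n‖) :
    traceNorm (fun i j => a (i + j)) ≤ ∑' n : ℕ, ((n : ℝ) + 1) * ‖a n‖ := by
  refine (isTraceRep_hankel ha).traceNorm_le.trans_eq ?_
  simp only [norm_smul_single_mul_norm_single]
  exact (hasSum_prod_comp_add (fun _ => norm_nonneg _) ha).tsum_eq

section Weighted

variable {ψ : ℕ → ℂ}

theorem summable_succ_mul_norm_succ (h : Summable fun k : ℕ => ((k : ℝ) + 1) * ‖ψ k‖) :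
    Summable fun k : ℕ => ((k : ℝ) + 1) * ‖ψ (k + 1)‖ :=
  ((summable_nat_add_iff 1).2 h).of_nonneg_of_le (fun _ => by positivity)
    fun k => by push_cast; gcongr; linarith

theorem succ_mul_norm_sub_le (ψ : ℕ → ℂ) (m : ℕ) :
    ((m : ℝ) + 1) * ‖ψ m - ψ (m + 1)‖ ≤ ((m : ℝ) + 1) * ‖ψ m‖ + ((m : ℝ) + 1) * ‖ψ (m + 1)‖ := by
  rw [← mul_add]
  gcongr
  exact norm_sub_le _ _

theorem summable_succ_mul_norm_sub (h : Summable fun k : ℕ => ((k : ℝ) + 1) * ‖ψ k‖) :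
    Summable fun m : ℕ => ((m : ℝ) + 1) * ‖ψ m - ψ (m + 1)‖ :=
  (h.add (summable_succ_mul_norm_succ h)).of_nonneg_of_le (fun _ => by positivity)
    (succ_mul_norm_sub_le ψ)

theorem hankelK_eq_hankelH_succ (ψ : ℕ → ℂ) : hankelK ψ = hankelH (fun k => ψ (k + 1)) := rfl

theorem memC_of_summable (h : Summable fun k : ℕ => ((k : ℝ) + 1) * ‖ψ k‖) : MemC ψ :=
  ⟨isTraceClass_hankel (summable_succ_mul_norm_sub h), hankelK_eq_hankelH_succ ψ ▸
    isTraceClass_hankel (summable_succ_mul_norm_sub (summable_succ_mul_norm_succ h))⟩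

theorem traceNorm_hankelH_le (h : Summable fun k : ℕ => ((k : ℝ) + 1) * ‖ψ k‖) :
    traceNorm (hankelH ψ) ≤
      ∑' k : ℕ, ((k : ℝ) + 1) * ‖ψ k‖ + ∑' k : ℕ, ((k : ℝ) + 1) * ‖ψ (k + 1)‖ :=
  calc traceNorm (hankelH ψ) ≤ ∑' m : ℕ, ((m : ℝ) + 1) * ‖ψ m - ψ (m + 1)‖ :=
        traceNorm_hankel_le (summable_succ_mul_norm_sub h)
    _ ≤ ∑' m : ℕ, (((m : ℝ) + 1) * ‖ψ m‖ + ((m : ℝ) + 1) * ‖ψ (m + 1)‖) :=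
        (summable_succ_mul_norm_sub h).tsum_le_tsum (succ_mul_norm_sub_le ψ)
          (h.add (summable_succ_mul_norm_succ h))
    _ = _ := h.tsum_add (summable_succ_mul_norm_succ h)

theorem cNorm_le (h : Summable fun k : ℕ => ((k : ℝ) + 1) * ‖ψ k‖) :
    CNorm ψ ≤ ‖ψ 0‖ + ∑' k : ℕ, 4 * (k : ℝ) * ‖ψ k‖ + ‖limUnder atTop ψ‖ := by
  have hH := traceNorm_hankelH_le h
  have hK := traceNorm_hankelH_le (summable_succ_mul_norm_succ h)
  have hA : HasSum (fun k => ‖ψ k‖) (∑' k, ‖ψ k‖) :=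
    (h.of_nonneg_of_le (fun _ => norm_nonneg _) fun k => by nlinarith [norm_nonneg (ψ k)]).hasSum
  have hB : HasSum (fun k : ℕ => (k : ℝ) * ‖ψ k‖) (∑' k : ℕ, (k : ℝ) * ‖ψ k‖) :=
    (h.of_nonneg_of_le (fun _ => by positivity) fun k => by nlinarith [norm_nonneg (ψ k)]).hasSum
  have hP : ∑' k : ℕ, ((k : ℝ) + 1) * ‖ψ k‖ = ∑' k : ℕ, (k : ℝ) * ‖ψ k‖ + ∑' k, ‖ψ k‖ := by
    refine HasSum.tsum_eq ?_
    convert hB.add hA using 1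
    ext k
    ring
  have hQ : ∑' k : ℕ, ((k : ℝ) + 1) * ‖ψ (k + 1)‖ = ∑' k : ℕ, (k : ℝ) * ‖ψ k‖ := by
    simpa using ((hasSum_nat_add_iff' 1).2 hB).tsum_eq
  have hR : ∑' k : ℕ, ((k : ℝ) + 1) * ‖ψ (k + 1 + 1)‖ =
      ∑' k : ℕ, (k : ℝ) * ‖ψ k‖ - ∑' k, ‖ψ k‖ + ‖ψ 0‖ := by
    have hshift := (hasSum_nat_add_iff' 2).2 (hB.sub hA)
    simp [Finset.sum_range_succ] at hshift
    rw [← hshift.tsum_eq]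
    congr 1
    ext k
    ring
  have h4B : ∑' k : ℕ, 4 * (k : ℝ) * ‖ψ k‖ = 4 * ∑' k : ℕ, (k : ℝ) * ‖ψ k‖ := by
    simp only [mul_assoc, tsum_mul_left]
  rw [CNorm, hankelK_eq_hankelH_succ, h4B]
  rw [hP, hQ] at hH
  rw [hQ, hR] at hK
  linarith

end Weighted

section Geometric

variable {r : ℝ}

theorem summable_succ_mul_pow (hr0 : 0 ≤ r) (hr1 : r < 1) :
    Summable fun k : ℕ => ((k : ℝ) + 1) * r ^ k := by
  have hr : ‖r‖ < 1 := by rwa [Real.norm_of_nonneg hr0]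
  simpa [add_mul] using
    (hasSum_coe_mul_geometric_of_norm_lt_one hr).summable.add (summable_geometric_of_lt_one hr0 hr1)

theorem hankelH_pow (r : ℝ) : hankelH (fun k => (r : ℂ) ^ k) = geometricHankel (1 - r) r := by
  ext i j
  simp only [hankelH, geometricHankel]
  push_cast
  ring

theorem hankelK_pow (r : ℝ) :
    hankelK (fun k => (r : ℂ) ^ k) = geometricHankel (r * (1 - r)) r := by
  ext i j
  simp only [hankelK, geometricHankel]
  push_cast
  ring

theorem cNorm_pow (hr0 : 0 ≤ r) (hr1 : r < 1) : CNorm (fun k => (r : ℂ) ^ k) = 1 := by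
  have hr : |r| < 1 := by rwa [abs_of_nonneg hr0]
  have hlim : limUnder atTop (fun k => (r : ℂ) ^ k) = 0 :=
    (tendsto_pow_atTop_nhds_zero_of_norm_lt_one (by rwa [Complex.norm_real])).limUnder_eq
  have hden : 1 - r ^ 2 ≠ 0 := by nlinarith
  rw [CNorm, hankelH_pow, hankelK_pow, traceNorm_geometricHankel (by linarith) hr,
    traceNorm_geometricHankel (by nlinarith) hr, hlim, norm_zero, add_zero]
  field_simp
  ring

theorem norm_pow_sub_ite (hr0 : 0 ≤ r) (n k : ℕ) :
    ‖(r : ℂ) ^ k - (if k ≤ n then (r : ℂ) ^ k else 0)‖ = if k ≤ n then 0 else r ^ k := by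
  split_ifs <;> simp [abs_of_nonneg hr0]

theorem cNorm_pow_sub_ite_le (hr0 : 0 ≤ r) (hr1 : r < 1) (n : ℕ) :
    CNorm (fun k => (r : ℂ) ^ k - (if k ≤ n then (r : ℂ) ^ k else 0)) ≤
      ∑' j : ℕ, 4 * ((n + 1 + j : ℕ) : ℝ) * r ^ (n + 1 + j) := by
  set ψ : ℕ → ℂ := fun k => (r : ℂ) ^ k - (if k ≤ n then (r : ℂ) ^ k else 0)
  have hψ_le (k : ℕ) : ‖ψ k‖ ≤ r ^ k := by
    rw [norm_pow_sub_ite hr0]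
    split_ifs
    exacts [pow_nonneg hr0 k, le_rfl]
  have hsum : Summable fun k : ℕ => ((k : ℝ) + 1) * ‖ψ k‖ :=
    (summable_succ_mul_pow hr0 hr1).of_nonneg_of_le (fun _ => by positivity)
      fun k => by gcongr; exact hψ_le k
  have hlim : limUnder atTop ψ = 0 :=
    (squeeze_zero_norm hψ_le (tendsto_pow_atTop_nhds_zero_of_lt_one hr0 hr1)).limUnder_eq
  have htail : ∑' k : ℕ, 4 * (k : ℝ) * ‖ψ k‖ =
      ∑' j : ℕ, 4 * ((n + 1 + j : ℕ) : ℝ) * r ^ (n + 1 + j) := by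
    have hsum4 : Summable fun k : ℕ => 4 * (k : ℝ) * ‖ψ k‖ :=
      (hsum.mul_left 4).of_nonneg_of_le (fun _ => by positivity)
        fun k => by nlinarith [norm_nonneg (ψ k)]
    rw [← hsum4.sum_add_tsum_nat_add (n + 1), Finset.sum_eq_zero fun k hk => ?_, zero_add]
    · refine tsum_congr fun j => ?_
      rw [add_comm j, norm_pow_sub_ite hr0, if_neg (by omega)]
    · rw [norm_pow_sub_ite hr0, if_pos (by simpa [Nat.lt_succ_iff] using hk), mul_zero]
  calc CNorm ψ ≤ ‖ψ 0‖ + ∑' k : ℕ, 4 * (k : ℝ) * ‖ψ k‖ + ‖limUnder atTop ψ‖ := cNorm_le hsum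
    _ = _ := by simp [ψ, hlim, htail]

theorem tendsto_tsum_four_mul_pow_tail (r : ℝ) :
    Tendsto (fun n : ℕ => ∑' j : ℕ, 4 * ((n + 1 + j : ℕ) : ℝ) * r ^ (n + 1 + j)) atTop (nhds 0) := by
  refine ((tendsto_sum_nat_add fun k => 4 * (k : ℝ) * r ^ k).comp
    (tendsto_add_atTop_nat 1)).congr fun n => tsum_congr fun j => ?_
  simp only [add_comm j]

end Geometric

/-- For `r ∈ (0,1)`: `φ_r(k) = r^k` and its truncations `φ_{r,n}` belong to
`𝒞`, `‖φ_r‖_𝒞 = 1`, `‖φ_r − φ_{r,n}‖_𝒞 ≤ ∑_{k=n+1}^∞ 4k·r^k`, and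
`‖φ_r − φ_{r,n}‖_𝒞 → 0` as `n → ∞`. -/
theorem stmt7 (r : ℝ) (hr0 : 0 < r) (hr1 : r < 1) :
    MemC (fun k : ℕ => ((r : ℂ)) ^ k) ∧
    (∀ n : ℕ, MemC (fun k : ℕ => if k ≤ n then ((r : ℂ)) ^ k else 0)) ∧
    CNorm (fun k : ℕ => ((r : ℂ)) ^ k) = 1 ∧
    (∀ n : ℕ,
      CNorm (fun k : ℕ => ((r : ℂ)) ^ k - (if k ≤ n then ((r : ℂ)) ^ k else 0)) ≤
        ∑' j : ℕ, 4 * ((n + 1 + j : ℕ) : ℝ) * r ^ (n + 1 + j)) ∧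
    Tendsto
      (fun n : ℕ =>
        CNorm (fun k : ℕ => ((r : ℂ)) ^ k - (if k ≤ n then ((r : ℂ)) ^ k else 0)))
      atTop (nhds 0) := by
  have hbound := cNorm_pow_sub_ite_le hr0.le hr1
  refine ⟨memC_of_summable ?_, fun n => memC_of_summable ?_, cNorm_pow hr0.le hr1, hbound,
    squeeze_zero (fun n => cNorm_nonneg _) hbound (tendsto_tsum_four_mul_pow_tail r)⟩
  · simpa [abs_of_pos hr0] using summable_succ_mul_pow hr0.le hr1
  · refine summable_of_ne_finset_zero (s := Finset.range (n + 1)) fun k hk => ?_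
    simp [if_neg (by simpa [Nat.lt_succ_iff] using hk : ¬k ≤ n)]

end
end

section
/- Let φ : ℕ → ℂ belong to the class 𝒞, i.e. the Hankel matrices h_φ(i,j) = φ(i+j) − φ(i+j+1) and k_φ(i,j) = φ(i+j+1) − φ(i+j+2) are of trace class. Then ∑_{n=0}^∞ |φ(n) − φ(n+1)| ≤ ‖h_φ‖₁ + ‖k_φ‖₁ < ∞; in particular the limit lim_{n→∞} φ(n) exists. -/
/-!
The `n`-th diagonal entry of the Hankel matrix `(i, j) ↦ a (i + j)` is `a (2n)`. For any
representation `h i j = ∑ₖ xₖ(i) conj (yₖ(j))`, Cauchy–Schwarz in each term gives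
`∑ₘ |h m m| ≤ ∑ₖ ∑ₘ |xₖ(m)| |yₖ(m)| ≤ ∑ₖ ‖xₖ‖₂ ‖yₖ‖₂`, so the diagonal of a trace-class matrix is
absolutely summable with sum at most the trace norm. The diagonals of `h_φ` and `k_φ` are the
even- and odd-indexed differences `φ(n) − φ(n+1)`, and absolutely summable increments make `φ`
Cauchy.
-/

open MeasureTheory Filter

noncomputable section

section Representation

variable {x y : ℕ → ell2}

lemma ell2.summable_norm_mul_norm_and_tsum_le (u v : ell2) :
    (Summable fun m => ‖(u : ℕ → ℂ) m‖ * ‖(v : ℕ → ℂ) m‖) ∧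
      ∑' m, ‖(u : ℕ → ℂ) m‖ * ‖(v : ℕ → ℂ) m‖ ≤ ‖u‖ * ‖v‖ :=
  lp.tsum_mul_le_mul_norm (by norm_num [Real.HolderConjugate.two_two]) u v

lemma summable_uncurry_norm_mul_norm (hs : Summable fun k => ‖x k‖ * ‖y k‖) :
    Summable fun p : ℕ × ℕ => ‖(x p.1 : ℕ → ℂ) p.2‖ * ‖(y p.1 : ℕ → ℂ) p.2‖ := by
  have hrow k := ell2.summable_norm_mul_norm_and_tsum_le (x k) (y k)
  refine (summable_prod_of_nonneg fun p => by positivity).2 ⟨fun k => (hrow k).1, ?_⟩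
  exact hs.of_nonneg_of_le (fun k => tsum_nonneg fun m => by positivity) fun k => (hrow k).2

lemma summable_norm_diag_and_tsum_le {h : ℕ → ℕ → ℂ}
    (hs : Summable fun k => ‖x k‖ * ‖y k‖)
    (hrep : ∀ i j, h i j = ∑' k, (x k : ℕ → ℂ) i * (starRingEnd ℂ) ((y k : ℕ → ℂ) j)) :
    (Summable fun m => ‖h m m‖) ∧ ∑' m, ‖h m m‖ ≤ ∑' k, ‖x k‖ * ‖y k‖ := by
  set F : ℕ → ℕ → ℝ := fun k m => ‖(x k : ℕ → ℂ) m‖ * ‖(y k : ℕ → ℂ) m‖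
  have hrow k := ell2.summable_norm_mul_norm_and_tsum_le (x k) (y k)
  have hF : Summable (Function.uncurry F) := summable_uncurry_norm_mul_norm hs
  have hcol : ∀ m, Summable fun k => F k m := fun m => hF.prod_symm.prod_factor m
  have hcolSum : Summable fun m => ∑' k, F k m := hF.prod_symm.prod
  have hdiag : ∀ m, ‖h m m‖ ≤ ∑' k, F k m := fun m => by
    rw [hrep m m]
    refine (norm_tsum_le_tsum_norm ?_).trans_eq (tsum_congr fun k => ?_)
    · exact (hcol m).congr fun k => by simp [F]
    · simp [F]
  have hsum : Summable fun m => ‖h m m‖ :=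
    hcolSum.of_nonneg_of_le (fun m => norm_nonneg _) hdiag
  refine ⟨hsum, ?_⟩
  calc ∑' m, ‖h m m‖ ≤ ∑' m, ∑' k, F k m := hsum.tsum_le_tsum hdiag hcolSum
    _ = ∑' k, ∑' m, F k m := hF.tsum_comm' (fun k => (hrow k).1) hcol
    _ ≤ ∑' k, ‖x k‖ * ‖y k‖ := hF.prod.tsum_le_tsum (fun k => (hrow k).2) hs

end Representation

lemma IsTraceClass.summable_norm_diag {h : ℕ → ℕ → ℂ} (hh : IsTraceClass h) :
    Summable fun m => ‖h m m‖ := by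
  obtain ⟨x, y, hs, hrep⟩ := hh
  exact (summable_norm_diag_and_tsum_le hs hrep).1

lemma IsTraceClass.tsum_norm_diag_le_traceNorm {h : ℕ → ℕ → ℂ} (hh : IsTraceClass h) :
    ∑' m, ‖h m m‖ ≤ traceNorm h := by
  obtain ⟨x, y, hs, hrep⟩ := hh
  refine le_csInf ⟨_, x, y, hs, hrep, rfl⟩ ?_
  rintro c ⟨x', y', hs', hrep', rfl⟩
  exact (summable_norm_diag_and_tsum_le hs' hrep').2

lemma IsTraceClass.summable_norm_hankel_diag {a : ℕ → ℂ} (ha : IsTraceClass fun i j => a (i + j)) :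
    Summable fun m => ‖a (2 * m)‖ := by
  simpa [two_mul] using ha.summable_norm_diag

lemma IsTraceClass.tsum_norm_hankel_diag_le {a : ℕ → ℂ} (ha : IsTraceClass fun i j => a (i + j)) :
    ∑' m, ‖a (2 * m)‖ ≤ traceNorm fun i j => a (i + j) := by
  simpa [two_mul] using ha.tsum_norm_diag_le_traceNorm

lemma exists_tendsto_of_summable_norm_sub {E : Type*} [NormedAddCommGroup E] [CompleteSpace E]
    {φ : ℕ → E} (hφ : Summable fun n => ‖φ n - φ (n + 1)‖) : ∃ c, Tendsto φ atTop (nhds c) :=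
  cauchySeq_tendsto_of_complete <| cauchySeq_of_summable_dist <| by simpa [dist_eq_norm] using hφ

/-- If both Hankel matrices `h_φ` and `k_φ` are of trace class, then
`∑ |φ(n) − φ(n+1)| ≤ ‖h_φ‖₁ + ‖k_φ‖₁ < ∞`; in particular `lim φ(n)` exists. -/
theorem stmt9 (φ : ℕ → ℂ)
    (hh : IsTraceClass (fun i j => φ (i+j) - φ (i+j+1)))
    (hk : IsTraceClass (fun i j => φ (i+j+1) - φ (i+j+2))) :
    (Summable fun n : ℕ => ‖φ n - φ (n+1)‖) ∧
    (∑' n : ℕ, ‖φ n - φ (n+1)‖) ≤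
      traceNorm (fun i j => φ (i+j) - φ (i+j+1)) +
        traceNorm (fun i j => φ (i+j+1) - φ (i+j+2)) ∧
    ∃ c : ℂ, Filter.Tendsto φ Filter.atTop (nhds c) := by
  have heven : Summable fun m => ‖φ (2 * m) - φ (2 * m + 1)‖ :=
    hh.summable_norm_hankel_diag (a := fun n => φ n - φ (n + 1))
  have hodd : Summable fun m => ‖φ (2 * m + 1) - φ (2 * m + 1 + 1)‖ :=
    hk.summable_norm_hankel_diag (a := fun n => φ (n + 1) - φ (n + 2))
  have hsum : Summable fun n => ‖φ n - φ (n + 1)‖ := heven.even_add_odd hodd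
  refine ⟨hsum, ?_, exists_tendsto_of_summable_norm_sub hsum⟩
  rw [← tsum_even_add_odd (f := fun n => ‖φ n - φ (n + 1)‖) heven hodd]
  exact add_le_add (hh.tsum_norm_hankel_diag_le (a := fun n => φ n - φ (n + 1)))
    (hk.tsum_norm_hankel_diag_le (a := fun n => φ (n + 1) - φ (n + 2)))

end
end

section
/- Let φ : ℕ → ℂ and suppose the Hankel matrix ĥ_φ(i,j) = φ(i+j) − φ(i+j+2) is of trace class. Then there exist unique constants c₁, c₂ ∈ ℂ and a unique function ψ : ℕ → ℂ with lim_{n→∞} ψ(n) = 0 such that φ(n) = c₁ + (−1)ⁿ c₂ + ψ(n) for all n ∈ ℕ. -/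
open MeasureTheory Filter

noncomputable section

/-!
The entry `(m, m + s)` of the Hankel matrix is `φ (2m + s) - φ (2m + s + 2)`, the increment of the
subsequence `m ↦ φ (2m + s)`. Writing the trace-class matrix as `∑ₖ xₖ ⊗ conj yₖ`, the
Cauchy–Schwarz inequality bounds the `ℓ¹` norm of the `s`-th off-diagonal by `∑ₖ ‖xₖ‖ ‖yₖ‖ < ∞`.
So the even and the odd subsequence of `φ` have bounded variation and converge, to `a` and `b`
say, and then `c₁ = (a + b) / 2`, `c₂ = (a - b) / 2` are forced.
-/

open Function Topology

namespace lp

variable {ι : Type*}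

lemma sum_norm_sq_le_norm_sq {E : ι → Type*} [∀ i, NormedAddCommGroup (E i)]
    (x : lp E 2) (s : Finset ι) : ∑ i ∈ s, ‖x i‖ ^ 2 ≤ ‖x‖ ^ 2 := by
  simpa [Real.rpow_natCast] using lp.sum_rpow_le_norm_rpow (by norm_num) x s

variable {E : Type*} [NormedAddCommGroup E]

lemma sum_norm_mul_norm_comp_le (x y : lp (fun _ : ι => E) 2) {e : ι → ι} (he : Injective e)
    (s : Finset ι) : ∑ i ∈ s, ‖x i‖ * ‖y (e i)‖ ≤ ‖x‖ * ‖y‖ := by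
  have hy : ∑ i ∈ s, ‖y (e i)‖ ^ 2 ≤ ‖y‖ ^ 2 := by
    simpa using sum_norm_sq_le_norm_sq y (s.map ⟨e, he⟩)
  calc ∑ i ∈ s, ‖x i‖ * ‖y (e i)‖
      ≤ √(∑ i ∈ s, ‖x i‖ ^ 2) * √(∑ i ∈ s, ‖y (e i)‖ ^ 2) := Real.sum_mul_le_sqrt_mul_sqrt _ _ _
    _ ≤ √(‖x‖ ^ 2) * √(‖y‖ ^ 2) := by gcongr; exact sum_norm_sq_le_norm_sq x s
    _ = ‖x‖ * ‖y‖ := by rw [Real.sqrt_sq (norm_nonneg _), Real.sqrt_sq (norm_nonneg _)]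

lemma tsum_norm_mul_norm_comp_le (x y : lp (fun _ : ι => E) 2) {e : ι → ι} (he : Injective e) :
    (Summable fun i => ‖x i‖ * ‖y (e i)‖) ∧ ∑' i, ‖x i‖ * ‖y (e i)‖ ≤ ‖x‖ * ‖y‖ :=
  have hnonneg : 0 ≤ fun i => ‖x i‖ * ‖y (e i)‖ := fun _ => by positivity
  ⟨summable_of_sum_le hnonneg (sum_norm_mul_norm_comp_le x y he),
    Real.tsum_le_of_sum_le hnonneg (sum_norm_mul_norm_comp_le x y he)⟩

end lp

lemma IsTraceClass.summable_norm_apply_comp {h : ℕ → ℕ → ℂ} (hh : IsTraceClass h)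
    {e : ℕ → ℕ} (he : Injective e) : Summable fun n => ‖h n (e n)‖ := by
  obtain ⟨x, y, hsum, hrep⟩ := hh
  set g : ℕ × ℕ → ℝ := fun p => ‖(x p.1 : ℕ → ℂ) p.2‖ * ‖(y p.1 : ℕ → ℂ) (e p.2)‖
  have hg : Summable g := by
    refine (summable_prod_of_nonneg fun _ => by positivity).2
      ⟨fun k => (lp.tsum_norm_mul_norm_comp_le (x k) (y k) he).1, ?_⟩
    exact hsum.of_nonneg_of_le (fun _ => tsum_nonneg fun _ => by positivity)
      fun k => (lp.tsum_norm_mul_norm_comp_le (x k) (y k) he).2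
  obtain ⟨hfiber, hrow⟩ := (summable_prod_of_nonneg fun _ => by positivity).1 hg.prod_symm
  refine hrow.of_nonneg_of_le (fun _ => norm_nonneg _) fun n => ?_
  rw [hrep]
  refine (norm_tsum_le_tsum_norm ?_).trans_eq ?_ <;> simp only [norm_mul, Complex.norm_conj]
  exacts [hfiber n, rfl]

lemma tendsto_of_tendsto_two_mul_of_tendsto_two_mul_add_one {α : Type*} {u : ℕ → α}
    {l : Filter α} (h₀ : Tendsto (fun m => u (2 * m)) atTop l)
    (h₁ : Tendsto (fun m => u (2 * m + 1)) atTop l) : Tendsto u atTop l := by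
  intro s hs
  obtain ⟨N₀, hN₀⟩ := mem_atTop_sets.1 (h₀ hs)
  obtain ⟨N₁, hN₁⟩ := mem_atTop_sets.1 (h₁ hs)
  refine mem_atTop_sets.2 ⟨2 * (N₀ + N₁), fun n hn => ?_⟩
  obtain ⟨m, rfl | rfl⟩ := Nat.even_or_odd' n
  · exact hN₀ m (by omega)
  · exact hN₁ m (by omega)

section Alternating

variable {𝕜 : Type*} [NormedField 𝕜]

lemma tendsto_two_mul_of_eq_add_neg_one_pow_mul_add {u ψ : ℕ → 𝕜} {c₁ c₂ : 𝕜}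
    (hψ : Tendsto ψ atTop (𝓝 0)) (hu : ∀ n, u n = c₁ + (-1) ^ n * c₂ + ψ n) :
    Tendsto (fun m => u (2 * m)) atTop (𝓝 (c₁ + c₂)) ∧
      Tendsto (fun m => u (2 * m + 1)) atTop (𝓝 (c₁ - c₂)) := by
  have hψ₀ : Tendsto (fun m => ψ (2 * m)) atTop (𝓝 0) :=
    hψ.comp (StrictMono.tendsto_atTop fun a b hab => by omega)
  have hψ₁ : Tendsto (fun m => ψ (2 * m + 1)) atTop (𝓝 0) :=
    hψ.comp (StrictMono.tendsto_atTop fun a b hab => by omega)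
  constructor
  · simpa [hu, pow_mul] using hψ₀.const_add (c₁ + c₂)
  · simpa [hu, pow_succ, pow_mul, sub_eq_add_neg, add_assoc] using hψ₁.const_add (c₁ - c₂)

lemma existsUnique_eq_add_neg_one_pow_mul_add [CharZero 𝕜] {u : ℕ → 𝕜} {a b : 𝕜}
    (ha : Tendsto (fun m => u (2 * m)) atTop (𝓝 a))
    (hb : Tendsto (fun m => u (2 * m + 1)) atTop (𝓝 b)) :
    ∃! p : 𝕜 × 𝕜 × (ℕ → 𝕜),
      Tendsto p.2.2 atTop (𝓝 0) ∧ ∀ n, u n = p.1 + (-1) ^ n * p.2.1 + p.2.2 n := by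
  set c₁ := (a + b) / 2
  set c₂ := (a - b) / 2
  refine ⟨(c₁, c₂, fun n => u n - c₁ - (-1) ^ n * c₂), ⟨?_, fun n => by ring⟩, ?_⟩
  · refine tendsto_of_tendsto_two_mul_of_tendsto_two_mul_add_one ?_ ?_
    · have : c₁ + c₂ = a := by ring
      simpa [pow_mul, ← this, sub_sub] using ha.sub_const (c₁ + c₂)
    · have : c₁ - c₂ = b := by ring
      simpa [pow_succ, pow_mul, ← this, sub_add] using hb.sub_const (c₁ - c₂)
  · rintro ⟨d₁, d₂, χ⟩ ⟨hχ, hu⟩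
    obtain ⟨ha', hb'⟩ := tendsto_two_mul_of_eq_add_neg_one_pow_mul_add hχ hu
    have hsum : d₁ + d₂ = a := tendsto_nhds_unique ha' ha
    have hdiff : d₁ - d₂ = b := tendsto_nhds_unique hb' hb
    have hd₁ : d₁ = c₁ := by linear_combination (hsum + hdiff) / 2
    have hd₂ : d₂ = c₂ := by linear_combination (hsum - hdiff) / 2
    subst hd₁ hd₂
    simp only [Prod.mk.injEq, true_and]
    funext n
    rw [hu n]; ring

end Alternating

/-- If the Hankel matrix `ĥ_φ(i,j) = φ(i+j) − φ(i+j+2)` is of trace class,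
then there exist unique `c₁, c₂ ∈ ℂ` and a unique `ψ : ℕ → ℂ` with `ψ(n) → 0` such that
`φ(n) = c₁ + (−1)ⁿ c₂ + ψ(n)` for all `n`. -/
theorem stmt13 (φ : ℕ → ℂ)
    (h : IsTraceClass (fun i j => φ (i+j) - φ (i+j+2))) :
    ∃! p : ℂ × ℂ × (ℕ → ℂ),
      Filter.Tendsto p.2.2 Filter.atTop (nhds 0) ∧
      ∀ n : ℕ, φ n = p.1 + (-1 : ℂ) ^ n * p.2.1 + p.2.2 n := by
  have hconv : ∀ s, ∃ a, Tendsto (fun m => φ (2 * m + s)) atTop (𝓝 a) := fun s => by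
    refine cauchySeq_tendsto_of_complete (cauchySeq_of_summable_dist ?_)
    refine (h.summable_norm_apply_comp (add_left_injective s)).congr fun m => ?_
    rw [dist_eq_norm, Nat.succ_eq_add_one]
    congr 3 <;> ring
  obtain ⟨a, ha⟩ := hconv 0
  obtain ⟨b, hb⟩ := hconv 1
  exact existsUnique_eq_add_neg_one_pow_mul_add ha hb

end
end
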